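/- Let (Ω, ℱ, P) be a probability space, let M ≥ 1 and R ≥ 1, let β : Fin R → Ω → Fin M be measurable band indices for the R repetitions of a packet, let γ : Fin R → Fin B → Fin M → Ω → ℝ be measurable SINR variables, let τ > 0, and let X : Fin B → Fin M → ℝ be a binary assignment matrix with X_{b,m} ∈ {0,1}. Suppose there exists a repetition index r₀ such that P(β_{r₀} = m) = 1/M for every m and, for every m, the event {β_{r₀} = m} is independent of the event ⋃_b {ω : X_{b,m} · γ_{r₀,b,m}(ω) ≥ τ}. Then the packet decoding probability P({ω : ∃ r, ∃ b, X_{b,β_r(ω)} · γ_{r,b,β_r(ω)}(ω) ≥ τ}) is bounded below by (1/M) · Σ_{m=1}^M [ Σ_b X_{b,m} · P(γ_{r₀,b,m} ≥ τ) − Σ_{b<k} X_{b,m} · X_{k,m} · P({γ_{r₀,b,m} ≥ τ} ∩ {γ_{r₀,k,m} ≥ τ}) ]. That is, the quadratic objective of the relaxed assignment problem is a lower bound on the packet decoding probability. -/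

import Mathlib

/-!
For each band `m`, the `m`-th term of the objective is the second Bonferroni lower bound for the
probability of `U m = ⋃ b, {X b m * γ r₀ b m ≥ τ}`: the 0/1 weights only select which events
enter. Independence and uniformity of `β r₀` turn `(1/M) P(U m)` into `P(β r₀ = m, U m)`; these
events are disjoint in `m`, and on each of them repetition `r₀` decodes the packet.
-/

open MeasureTheory Finset

theorem Fin.sum_sum_Ioi_castSucc {M : Type*} [AddCommMonoid M] {n : ℕ}
    (f : Fin (n + 1) → Fin (n + 1) → M) :
    ∑ i, ∑ j ∈ Ioi i, f i j
      = ∑ i : Fin n, ∑ j ∈ Ioi i, f i.castSucc j.castSucc + ∑ i : Fin n, f i.castSucc (.last n) := by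
  have hIoi (i : Fin n) : Ioi i.castSucc = insert (last n) ((Ioi i).map castSuccEmb) := by
    rw [map_castSuccEmb_Ioi, Finset.Ioo_insert_right (castSucc_lt_last i)]
    ext j; simp [le_last]
  rw [sum_univ_castSucc, ← top_eq_last, Finset.Ioi_top, sum_empty, add_zero,
    ← sum_add_distrib]
  refine sum_congr rfl fun i _ => ?_
  rw [hIoi, sum_insert (by simp), sum_map, add_comm]
  rfl

theorem sum_measureReal_sub_sum_inter_le_measureReal_iUnion {Ω : Type*} [MeasurableSpace Ω]
    (μ : Measure Ω) [IsFiniteMeasure μ] {n : ℕ} (A : Fin n → Set Ω)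
    (hA : ∀ i, MeasurableSet (A i)) :
    ∑ i, μ.real (A i) - ∑ i, ∑ j ∈ Ioi i, μ.real (A i ∩ A j) ≤ μ.real (⋃ i, A i) := by
  induction n with
  | zero => simp
  | succ n ih =>
    set U := ⋃ i : Fin n, A i.castSucc
    have hunion : μ.real (U ∪ A (.last n)) + μ.real (U ∩ A (.last n))
        = μ.real U + μ.real (A (.last n)) := measureReal_union_add_inter (hA _)
    have hinter : μ.real (U ∩ A (.last n)) ≤ ∑ i : Fin n, μ.real (A i.castSucc ∩ A (.last n)) := by
      rw [Set.iUnion_inter]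
      exact measureReal_iUnion_fintype_le _
    have := ih (fun i => A i.castSucc) (fun i => hA _)
    rw [Set.iUnion_fin_add_one_eq_iUnion_castSucc, Fin.sum_univ_castSucc,
      Fin.sum_sum_Ioi_castSucc (fun i j => μ.real (A i ∩ A j))]
    simp only [Function.comp_def]
    linarith

theorem measureReal_setOf_mul_ge_inter {Ω : Type*} [MeasurableSpace Ω] (μ : Measure Ω)
    {x τ : ℝ} (hx : x = 0 ∨ x = 1) (hτ : 0 < τ) (f : Ω → ℝ) (S : Set Ω) :
    μ.real ({ω | x * f ω ≥ τ} ∩ S) = x * μ.real ({ω | f ω ≥ τ} ∩ S) := by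
  rcases hx with rfl | rfl <;> simp [hτ.not_ge]

theorem measureReal_setOf_mem_eq_sum_fiber_inter {Ω ι : Type*} [MeasurableSpace Ω] [Fintype ι]
    [MeasurableSpace ι] [MeasurableSingletonClass ι] (μ : Measure Ω) [IsFiniteMeasure μ]
    {g : Ω → ι} (hg : Measurable g) {U : ι → Set Ω} (hU : ∀ i, MeasurableSet (U i)) :
    μ.real {ω | ω ∈ U (g ω)} = ∑ i, μ.real ({ω | g ω = i} ∩ U i) := by
  have hfibres : {ω | ω ∈ U (g ω)} = ⋃ i, {ω | g ω = i} ∩ U i := by ext; simp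
  rw [hfibres, measureReal_iUnion_fintype]
  · exact fun i j hij => (pairwise_disjoint_fiber g hij).mono
      Set.inter_subset_left Set.inter_subset_left
  · exact fun i => (hg (measurableSet_singleton i)).inter (hU i)

theorem assignment_objective_le_measureReal_iUnion {Ω : Type*} [MeasurableSpace Ω]
    (μ : Measure Ω) [IsFiniteMeasure μ] {n : ℕ} {x : Fin n → ℝ} (hx : ∀ i, x i = 0 ∨ x i = 1)
    {f : Fin n → Ω → ℝ} (hf : ∀ i, Measurable (f i)) {τ : ℝ} (hτ : 0 < τ) :
    ∑ i, x i * μ.real {ω | f i ω ≥ τ}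
        - ∑ i, ∑ j ∈ Ioi i, x i * x j * μ.real ({ω | f i ω ≥ τ} ∩ {ω | f j ω ≥ τ})
      ≤ μ.real (⋃ i, {ω | x i * f i ω ≥ τ}) := by
  have hsingle (i) : x i * μ.real {ω | f i ω ≥ τ} = μ.real {ω | x i * f i ω ≥ τ} := by
    simpa using (measureReal_setOf_mul_ge_inter μ (hx i) hτ (f i) Set.univ).symm
  have hpair (i j) : x i * x j * μ.real ({ω | f i ω ≥ τ} ∩ {ω | f j ω ≥ τ})
      = μ.real ({ω | x i * f i ω ≥ τ} ∩ {ω | x j * f j ω ≥ τ}) := by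
    rw [measureReal_setOf_mul_ge_inter μ (hx i) hτ, Set.inter_comm _ {ω | x j * f j ω ≥ τ},
      measureReal_setOf_mul_ge_inter μ (hx j) hτ, Set.inter_comm {ω | f j ω ≥ τ}, mul_assoc]
  simp only [hsingle, hpair]
  exact sum_measureReal_sub_sum_inter_le_measureReal_iUnion μ _
    fun i => measurableSet_le measurable_const ((hf i).const_mul _)

theorem packet_decoding_probability_lower_bound_general
    {Ω : Type*} [MeasurableSpace Ω] (P : Measure Ω) [IsProbabilityMeasure P]
    {B M R : ℕ}
    (β : Fin R → Ω → Fin M) (hβmeas : ∀ r, Measurable (β r))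
    (γ : Fin R → Fin B → Fin M → Ω → ℝ) (hγ : ∀ r b m, Measurable (γ r b m))
    (τ : ℝ) (hτ : 0 < τ)
    (X : Fin B → Fin M → ℝ) (hX : ∀ b m, X b m = 0 ∨ X b m = 1)
    (r₀ : Fin R)
    (hβunif : ∀ m : Fin M, (P {ω | β r₀ ω = m}).toReal = 1 / M)
    (hindep : ∀ m : Fin M,
      P ({ω | β r₀ ω = m} ∩ ⋃ b, {ω | X b m * γ r₀ b m ω ≥ τ})
        = P {ω | β r₀ ω = m} * P (⋃ b, {ω | X b m * γ r₀ b m ω ≥ τ})) :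
    (1 / M) * ∑ m,
        ((∑ b, X b m * (P {ω | γ r₀ b m ω ≥ τ}).toReal)
          - ∑ b, ∑ k ∈ Finset.Ioi b,
              X b m * X k m
                * (P ({ω | γ r₀ b m ω ≥ τ} ∩ {ω | γ r₀ k m ω ≥ τ})).toReal)
      ≤ (P {ω | ∃ r, ∃ b, X b (β r ω) * γ r b (β r ω) ω ≥ τ}).toReal := by
  simp only [← measureReal_def]
  calc (1 / M : ℝ) * ∑ m, _
      ≤ ∑ m, 1 / M * P.real (⋃ b, {ω | X b m * γ r₀ b m ω ≥ τ}) := by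
        rw [mul_sum]
        gcongr with m
        exact assignment_objective_le_measureReal_iUnion P (hX · m) (hγ r₀ · m) hτ
    _ = ∑ m, P.real ({ω | β r₀ ω = m} ∩ ⋃ b, {ω | X b m * γ r₀ b m ω ≥ τ}) :=
        sum_congr rfl fun m _ => by
          rw [measureReal_def, measureReal_def, hindep m, ENNReal.toReal_mul, hβunif m]
    _ = P.real {ω | ω ∈ ⋃ b, {ω' | X b (β r₀ ω) * γ r₀ b (β r₀ ω) ω' ≥ τ}} :=
        (measureReal_setOf_mem_eq_sum_fiber_inter P (hβmeas r₀)
          (U := fun m => ⋃ b, {ω | X b m * γ r₀ b m ω ≥ τ}) fun m =>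
          .iUnion fun b => measurableSet_le measurable_const ((hγ r₀ b m).const_mul _)).symm
    _ ≤ P.real {ω | ∃ r, ∃ b, X b (β r ω) * γ r b (β r ω) ω ≥ τ} :=
        measureReal_mono fun ω hω => ⟨r₀, Set.mem_iUnion.mp hω⟩

/-- The quadratic objective of the relaxed assignment problem is a lower bound on the packet
decoding probability: if some repetition `r₀` of the packet has a uniformly distributed band
`β r₀` which is, for each band `m`, independent of the decoding event
`⋃ b, {X b m * γ r₀ b m ≥ τ}`, then
`P(∃ r b, X b (β r) * γ r b (β r) ≥ τ) ≥
  (1/M) * ∑ m, (∑ b, X b m * P(γ r₀ b m ≥ τ)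
    − ∑_{b<k} X b m * X k m * P({γ r₀ b m ≥ τ} ∩ {γ r₀ k m ≥ τ}))`. -/
theorem packet_decoding_probability_lower_bound
    {Ω : Type*} [MeasurableSpace Ω] (P : Measure Ω) [IsProbabilityMeasure P]
    {B M R : ℕ} (hM : 1 ≤ M) (hR : 1 ≤ R)
    (β : Fin R → Ω → Fin M) (hβmeas : ∀ r, Measurable (β r))
    (γ : Fin R → Fin B → Fin M → Ω → ℝ) (hγ : ∀ r b m, Measurable (γ r b m))
    (τ : ℝ) (hτ : 0 < τ)
    (X : Fin B → Fin M → ℝ) (hX : ∀ b m, X b m = 0 ∨ X b m = 1)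
    (r₀ : Fin R)
    (hβunif : ∀ m : Fin M, (P {ω | β r₀ ω = m}).toReal = 1 / M)
    (hindep : ∀ m : Fin M,
      P ({ω | β r₀ ω = m} ∩ ⋃ b, {ω | X b m * γ r₀ b m ω ≥ τ})
        = P {ω | β r₀ ω = m} * P (⋃ b, {ω | X b m * γ r₀ b m ω ≥ τ})) :
    (1 / M) * ∑ m,
        ((∑ b, X b m * (P {ω | γ r₀ b m ω ≥ τ}).toReal)
          - ∑ b, ∑ k ∈ Finset.Ioi b,
              X b m * X k m
                * (P ({ω | γ r₀ b m ω ≥ τ} ∩ {ω | γ r₀ k m ω ≥ τ})).toReal)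
      ≤ (P {ω | ∃ r, ∃ b, X b (β r ω) * γ r b (β r ω) ω ≥ τ}).toReal :=
  packet_decoding_probability_lower_bound_general P β hβmeas γ hγ τ hτ X hX r₀ hβunif hindep
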